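/- arXiv:2207.02131 — 9 statements merged into one kernel-verified Lean document; each statement's English description precedes it below -/
import Mathlib

section
/- (Proposition 1(i)) Let p, n be natural numbers with 0 < p < n, let X be a centered p×n real data matrix with QR factorization (1/√(n−1)) • Xᵀ = Q * R where Qᵀ * Q = 1 and R is upper triangular and invertible. Then Xᵀ * cov(X)⁻¹ * X = ((n:ℝ)−1) • (Q * Qᵀ); in particular, for every observation index i the squared Mahalanobis distance D²(i) = (X.col i) ⬝ᵥ (cov(X)⁻¹ *ᵥ X.col i) equals (n−1) · q i, where q i = ∑ j, (Q i j)^2 is the i-th statistical leverage score. -/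
/-!
Up to the factor `n - 1`, `Xᵀ * (cov X)⁻¹ * X` is the hat matrix `A * (Aᵀ * A)⁻¹ * Aᵀ` of
`A = Xᵀ`. The hat matrix does not change when `A` is rescaled, and for `A = Q * R` with
`Qᵀ * Q = 1` and `R` invertible the factors `R` cancel, leaving `Q * Qᵀ`. The Mahalanobis
distances are the diagonal entries of this identity.
-/

open Matrix

/-- The sample covariance matrix of a centered data matrix. -/
noncomputable def cov {p n : ℕ} (X : Matrix (Fin p) (Fin n) ℝ) :
    Matrix (Fin p) (Fin p) ℝ :=
  ((n : ℝ) - 1)⁻¹ • (X * Xᵀ)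

namespace Matrix

theorem dotProduct_mulVec_col {k m R : Type*} [Fintype k] [NonUnitalSemiring R]
    (X : Matrix k m R) (M : Matrix k k R) (i : m) :
    (fun j => X j i) ⬝ᵥ (M *ᵥ fun j => X j i) = (Xᵀ * M * X) i i := by
  rw [dotProduct_mulVec, mul_apply']
  rfl

variable {m k K : Type*} [Fintype m] [Fintype k] [DecidableEq k] [Field K]

theorem inv_smul_of_ne_zero {c : K} (hc : c ≠ 0) (A : Matrix k k K) :
    (c • A)⁻¹ = c⁻¹ • A⁻¹ := by
  by_cases hA : IsUnit A.det
  · exact inv_smul' A (Units.mk0 c hc) hA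
  · have hcA : ¬IsUnit (c • A).det := by
      rwa [det_smul, IsUnit.mul_iff, and_iff_right ((Ne.isUnit hc).pow _)]
    rw [nonsing_inv_apply_not_isUnit _ hA, nonsing_inv_apply_not_isUnit _ hcA, smul_zero]

/-- The hat matrix of `A`: the orthogonal projection onto its column space when `Aᵀ * A` is
invertible. Its diagonal entries are the leverage scores. -/
noncomputable def hatMatrix (A : Matrix m k K) : Matrix m m K :=
  A * (Aᵀ * A)⁻¹ * Aᵀ

theorem hatMatrix_smul {c : K} (hc : c ≠ 0) (A : Matrix m k K) :
    hatMatrix (c • A) = hatMatrix A := by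
  have hgram : (c • A)ᵀ * (c • A) = (c * c) • (Aᵀ * A) := by
    rw [transpose_smul, Matrix.smul_mul, Matrix.mul_smul, smul_smul]
  rw [hatMatrix, hatMatrix, hgram, inv_smul_of_ne_zero (mul_ne_zero hc hc), transpose_smul]
  simp only [Matrix.smul_mul, Matrix.mul_smul, smul_smul]
  convert one_smul K (A * (Aᵀ * A)⁻¹ * Aᵀ) using 2
  field_simp

theorem hatMatrix_mul_of_transpose_mul_self_eq_one {Q : Matrix m k K} (hQ : Qᵀ * Q = 1)
    {R : Matrix k k K} (hR : IsUnit R.det) : hatMatrix (Q * R) = Q * Qᵀ := by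
  have hRt : IsUnit Rᵀ.det := by rwa [det_transpose]
  have hgram : (Q * R)ᵀ * (Q * R) = Rᵀ * R := by
    rw [transpose_mul, Matrix.mul_assoc, ← Matrix.mul_assoc Qᵀ, hQ, Matrix.one_mul]
  calc hatMatrix (Q * R) = Q * (R * R⁻¹) * (Rᵀ⁻¹ * Rᵀ) * Qᵀ := by
        rw [hatMatrix, hgram, mul_inv_rev, transpose_mul]
        simp only [Matrix.mul_assoc]
    _ = Q * Qᵀ := by
        rw [mul_nonsing_inv _ hR, nonsing_inv_mul _ hRt, Matrix.mul_one, Matrix.mul_one]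

end Matrix

theorem transpose_mul_inv_cov_mul {p n : ℕ} (X : Matrix (Fin p) (Fin n) ℝ)
    (hn : (n : ℝ) - 1 ≠ 0) : Xᵀ * (cov X)⁻¹ * X = ((n : ℝ) - 1) • hatMatrix Xᵀ := by
  rw [cov, inv_smul_of_ne_zero (inv_ne_zero hn), inv_inv, Matrix.mul_smul, Matrix.smul_mul,
    hatMatrix, transpose_transpose]

theorem stmt_3_general {p n : ℕ} (hp : 0 < p) (hpn : p < n)
    (X : Matrix (Fin p) (Fin n) ℝ)
    (Q : Matrix (Fin n) (Fin p) ℝ) (R : Matrix (Fin p) (Fin p) ℝ)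
    (hQ : Qᵀ * Q = 1)
    (hRdet : IsUnit R.det)
    (hQR : ((n : ℝ) - 1) ^ (-(1 : ℝ)/2) • Xᵀ = Q * R) :
    Xᵀ * (cov X)⁻¹ * X = ((n : ℝ) - 1) • (Q * Qᵀ) ∧
    ∀ i : Fin n,
      (fun k => X k i) ⬝ᵥ ((cov X)⁻¹ *ᵥ (fun k => X k i)) =
        ((n : ℝ) - 1) * ∑ j, (Q i j) ^ 2 := by
  have hc : (0 : ℝ) < n - 1 := by
    have : (1 : ℝ) < n := by exact_mod_cast (Nat.succ_le_of_lt hp).trans_lt hpn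
    linarith
  have hs : ((n : ℝ) - 1) ^ (-(1 : ℝ)/2) ≠ 0 := (Real.rpow_pos_of_pos hc _).ne'
  have hmain : Xᵀ * (cov X)⁻¹ * X = ((n : ℝ) - 1) • (Q * Qᵀ) := by
    rw [transpose_mul_inv_cov_mul X hc.ne', ← hatMatrix_smul hs, hQR,
      hatMatrix_mul_of_transpose_mul_self_eq_one hQ hRdet]
  refine ⟨hmain, fun i => ?_⟩
  rw [dotProduct_mulVec_col, hmain]
  simp [mul_apply, sq]

/-- Proposition 1(i): `Xᵀ * cov(X)⁻¹ * X = (n-1) • (Q * Qᵀ)`; in particular the squared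
Mahalanobis distance of observation `i` equals `(n-1)` times the `i`-th statistical
leverage score `q i = ∑ j, (Q i j)^2`. -/
theorem stmt_3 {p n : ℕ} (hp : 0 < p) (hpn : p < n)
    (X : Matrix (Fin p) (Fin n) ℝ)
    (hXc : X *ᵥ (fun _ => (1 : ℝ)) = 0)
    (Q : Matrix (Fin n) (Fin p) ℝ) (R : Matrix (Fin p) (Fin p) ℝ)
    (hQ : Qᵀ * Q = 1)
    (hR : R.BlockTriangular id)
    (hRdet : IsUnit R.det)
    (hQR : ((n : ℝ) - 1) ^ (-(1 : ℝ)/2) • Xᵀ = Q * R) :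
    Xᵀ * (cov X)⁻¹ * X = ((n : ℝ) - 1) • (Q * Qᵀ) ∧
    ∀ i : Fin n,
      (fun k => X k i) ⬝ᵥ ((cov X)⁻¹ *ᵥ (fun k => X k i)) =
        ((n : ℝ) - 1) * ∑ j, (Q i j) ^ 2 :=
  stmt_3_general hp hpn X Q R hQ hRdet hQR
end

section
/- (Proposition 1(ii)) Let p, n be natural numbers with 0 < p < n, let X be a centered p×n real data matrix with QR factorization (1/√(n−1)) • Xᵀ = Q * R where Qᵀ * Q = 1 and R is upper triangular and invertible, and let w : ℝ → ℝ be a weight function. Then the one-step M-scatter matrix cov_w(X) = (n:ℝ)⁻¹ • ∑ i, w(D²(i)) • (X.col i) ⊗ (X.col i) equals (n:ℝ)⁻¹ • X * Matrix.diagonal (fun i => w(((n:ℝ)−1) * q i)) * Xᵀ, where q i = ∑ j, (Q i j)^2. -/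
open Matrix

/-- The squared Mahalanobis distance of observation `i` of the centered data matrix `X`. -/
noncomputable def mahalanobisSq {p n : ℕ} (X : Matrix (Fin p) (Fin n) ℝ) (i : Fin n) : ℝ :=
  (fun k => X k i) ⬝ᵥ ((cov X)⁻¹ *ᵥ (fun k => X k i))

/-- The one-step M-scatter matrix of `X` with weight function `w`. -/
noncomputable def covW {p n : ℕ} (w : ℝ → ℝ) (X : Matrix (Fin p) (Fin n) ℝ) :
    Matrix (Fin p) (Fin p) ℝ :=
  (n : ℝ)⁻¹ • ∑ i, w (mahalanobisSq X i) • vecMulVec (fun k => X k i) (fun k => X k i)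

/-!
Writing `s = √(n-1)`, the factorization gives `Xᵀ = s • Q R`, hence `cov X = Rᵀ Qᵀ Q R = Rᵀ R`
and the `i`-th observation is `s • Rᵀ Qᵢ`, where `Qᵢ` is the `i`-th row of `Q`. The factors `Rᵀ`
cancel against `(Rᵀ R)⁻¹ = R⁻¹ Rᵀ⁻¹`, so `D²(i) = (n-1) ‖Qᵢ‖²`, and a weighted sum of rank-one
matrices `xᵢ xᵢᵀ` is `X diag(d) Xᵀ`.
-/

namespace Matrix

variable {α : Type*} [CommRing α] {m k l : Type*} [Fintype m]

theorem mul_diagonal_mul_transpose_eq_sum [DecidableEq m] (A : Matrix k m α) (B : Matrix l m α)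
    (d : m → α) :
    A * diagonal d * Bᵀ = ∑ i, d i • vecMulVec (fun a => A a i) (fun b => B b i) := by
  ext a b
  rw [mul_apply]
  simp only [mul_diagonal, transpose_apply, sum_apply, smul_apply, vecMulVec_apply, smul_eq_mul]
  exact Finset.sum_congr rfl fun i _ => by ring

theorem qr_row_dotProduct_inv_gram_mulVec [Fintype k] [DecidableEq k] {Q : Matrix m k α}
    {R : Matrix k k α} (hQ : Qᵀ * Q = 1) (hR : IsUnit R.det) (i : m) :
    (Q * R) i ⬝ᵥ (((Q * R)ᵀ * (Q * R))⁻¹ *ᵥ (Q * R) i) = ∑ j, Q i j ^ 2 := by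
  have hRt : IsUnit Rᵀ.det := by rwa [det_transpose]
  have hgram : (Q * R)ᵀ * (Q * R) = Rᵀ * R := by
    rw [transpose_mul, Matrix.mul_assoc, ← Matrix.mul_assoc Qᵀ, hQ, Matrix.one_mul]
  have hrow : (Q * R) i = Rᵀ *ᵥ Q i := by
    ext j
    rw [mulVec_transpose, mul_apply_eq_vecMul]
  rw [hgram, mul_inv_rev, hrow, mulVec_mulVec, Matrix.mul_assoc, nonsing_inv_mul _ hRt,
    Matrix.mul_one, mulVec_transpose, ← dotProduct_mulVec, mulVec_mulVec,
    mul_nonsing_inv _ hR, one_mulVec, dotProduct]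
  exact Finset.sum_congr rfl fun j _ => (sq _).symm

end Matrix

theorem mahalanobisSq_eq_of_transpose_eq_smul {p n : ℕ} {X : Matrix (Fin p) (Fin n) ℝ}
    {Y : Matrix (Fin n) (Fin p) ℝ} {s : ℝ} (hs : s * s = (n : ℝ) - 1) (hs0 : s ≠ 0)
    (hXY : Xᵀ = s • Y) (i : Fin n) :
    mahalanobisSq X i = ((n : ℝ) - 1) * (Y i ⬝ᵥ ((Yᵀ * Y)⁻¹ *ᵥ Y i)) := by
  have hcol : (fun k => X k i) = s • Y i := congrFun hXY i
  have hcov : cov X = Yᵀ * Y := by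
    rw [cov, ← transpose_transpose X, hXY, transpose_transpose, transpose_smul, Matrix.smul_mul,
      Matrix.mul_smul, smul_smul, smul_smul, ← hs, mul_assoc,
      inv_mul_cancel₀ (mul_ne_zero hs0 hs0), one_smul]
  rw [mahalanobisSq, hcol, hcov, mulVec_smul, smul_dotProduct, dotProduct_smul, smul_smul,
    hs, smul_eq_mul]

theorem covW_eq_mul_diagonal_mul_transpose {p n : ℕ} (w : ℝ → ℝ) (X : Matrix (Fin p) (Fin n) ℝ) :
    covW w X = (n : ℝ)⁻¹ • (X * diagonal (fun i => w (mahalanobisSq X i)) * Xᵀ) := by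
  rw [covW, mul_diagonal_mul_transpose_eq_sum]

theorem stmt_4_general {p n : ℕ} (hp : 0 < p) (hpn : p < n)
    (X : Matrix (Fin p) (Fin n) ℝ)
    (Q : Matrix (Fin n) (Fin p) ℝ) (R : Matrix (Fin p) (Fin p) ℝ)
    (hQ : Qᵀ * Q = 1)
    (hRdet : IsUnit R.det)
    (hQR : ((n : ℝ) - 1) ^ (-(1 : ℝ)/2) • Xᵀ = Q * R)
    (w : ℝ → ℝ) :
    covW w X =
      (n : ℝ)⁻¹ •
        (X * Matrix.diagonal (fun i => w (((n : ℝ) - 1) * ∑ j, (Q i j) ^ 2)) * Xᵀ) := by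
  have hc : 0 < (n : ℝ) - 1 := by
    have : (2 : ℝ) ≤ n := by exact_mod_cast (show 2 ≤ n by omega)
    linarith
  set s := ((n : ℝ) - 1) ^ ((1 : ℝ) / 2)
  have hs : s * s = (n : ℝ) - 1 := by
    rw [← Real.rpow_add hc]; norm_num
  have hXt : Xᵀ = s • (Q * R) := by
    rw [← hQR, smul_smul, ← Real.rpow_add hc]; norm_num
  have hD : ∀ i, mahalanobisSq X i = ((n : ℝ) - 1) * ∑ j, Q i j ^ 2 := fun i => by
    rw [mahalanobisSq_eq_of_transpose_eq_smul hs (Real.rpow_pos_of_pos hc _).ne' hXt,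
      qr_row_dotProduct_inv_gram_mulVec hQ hRdet]
  simp only [covW_eq_mul_diagonal_mul_transpose, hD]

/-- Proposition 1(ii): the one-step M-scatter matrix `cov_w(X)` can be computed from the
QR factorization as `(1/n) • X * Diag(w((n-1) q_i)) * Xᵀ`, where
`q i = ∑ j, (Q i j)^2` are the leverage scores. -/
theorem stmt_4 {p n : ℕ} (hp : 0 < p) (hpn : p < n)
    (X : Matrix (Fin p) (Fin n) ℝ)
    (hXc : X *ᵥ (fun _ => (1 : ℝ)) = 0)
    (Q : Matrix (Fin n) (Fin p) ℝ) (R : Matrix (Fin p) (Fin p) ℝ)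
    (hQ : Qᵀ * Q = 1)
    (hR : R.BlockTriangular id)
    (hRdet : IsUnit R.det)
    (hQR : ((n : ℝ) - 1) ^ (-(1 : ℝ)/2) • Xᵀ = Q * R)
    (w : ℝ → ℝ) :
    covW w X =
      (n : ℝ)⁻¹ •
        (X * Matrix.diagonal (fun i => w (((n : ℝ) - 1) * ∑ j, (Q i j) ^ 2)) * Xᵀ) :=
  stmt_4_general hp hpn X Q R hQ hRdet hQR w
end

section
/- Let p, n be natural numbers with 0 < p < n, let X be a centered p×n real data matrix with QR factorization (1/√(n−1)) • Xᵀ = Q * R where Qᵀ * Q = 1 and R is upper triangular and invertible. With W = cov(X)^{1/2} * R⁻¹ (so W is orthogonal) and cov(X)^{−1/2} = (cov(X)^{1/2})⁻¹, one has Xᵀ * cov(X)^{−1/2} = √((n:ℝ)−1) • (Q * Wᵀ), and equivalently cov(X)^{−1/2} * X = √((n:ℝ)−1) • (W * Qᵀ). -/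
/-!
Write `c = √(n-1)`, so that `Xᵀ = c • (Q * R)`. Since `Q` has orthonormal columns,
`cov X = c⁻² • (c • Q R)ᵀ (c • Q R) = Rᵀ R`, hence `S * S = Rᵀ * R`. For a symmetric invertible
`S` this says exactly that `W = S * R⁻¹` satisfies `Wᵀ = R * S⁻¹`, and then
`Xᵀ * S⁻¹ = c • Q * (R * S⁻¹) = c • (Q * Wᵀ)`; the second identity is its transpose.
-/

open Matrix

namespace Matrix

variable {m n K : Type*} [Fintype m] [Fintype n] [DecidableEq n]

theorem transpose_mul_self_of_transpose_mul_eq_one [CommRing K] {Q : Matrix m n K}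
    (hQ : Qᵀ * Q = 1) (R : Matrix n n K) : (Q * R)ᵀ * (Q * R) = Rᵀ * R := by
  rw [transpose_mul, Matrix.mul_assoc, ← Matrix.mul_assoc Qᵀ, hQ, Matrix.one_mul]

theorem isUnit_det_of_transpose_mul_self_eq [Field K] {S R : Matrix n n K}
    (h : Sᵀ * S = Rᵀ * R) (hR : IsUnit R.det) : IsUnit S.det := by
  have hdet := congrArg det h
  simp only [det_mul, det_transpose] at hdet
  rw [isUnit_iff_ne_zero] at hR ⊢
  exact fun hS => mul_ne_zero hR hR (by rw [← hdet, hS, mul_zero])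

/-- The orthogonality of `S * R⁻¹`. -/
theorem transpose_mul_inv_eq_mul_inv_of_transpose_mul_self_eq [Field K] {S R : Matrix n n K}
    (h : Sᵀ * S = Rᵀ * R) (hR : IsUnit R.det) : (S * R⁻¹)ᵀ = R * S⁻¹ := by
  have hS := isUnit_det_of_transpose_mul_self_eq h hR
  have hRt : IsUnit Rᵀ.det := by rwa [det_transpose]
  calc (S * R⁻¹)ᵀ = Rᵀ⁻¹ * (Sᵀ * S) * S⁻¹ := by
        simp only [transpose_mul, transpose_nonsing_inv, Matrix.mul_assoc,
          mul_nonsing_inv _ hS, Matrix.mul_one]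
    _ = R * S⁻¹ := by
        rw [h, ← Matrix.mul_assoc, nonsing_inv_mul _ hRt, Matrix.one_mul]

end Matrix

theorem Real.sqrt_smul_rpow_neg_half_smul {M : Type*} [AddCommGroup M] [Module ℝ M]
    {x : ℝ} (hx : 0 < x) (A : M) : √x • (x ^ (-(1 : ℝ) / 2) • A) = A := by
  rw [smul_smul, Real.sqrt_eq_rpow, ← Real.rpow_add hx]
  norm_num

theorem cov_eq_transpose_mul_self_of_qr {p n : ℕ} (hn : 0 < (n : ℝ) - 1)
    {X : Matrix (Fin p) (Fin n) ℝ} {Q : Matrix (Fin n) (Fin p) ℝ} {R : Matrix (Fin p) (Fin p) ℝ}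
    (hQ : Qᵀ * Q = 1) (hX : Xᵀ = √((n : ℝ) - 1) • (Q * R)) : cov X = Rᵀ * R := by
  have hXX : X * Xᵀ = ((n : ℝ) - 1) • (Rᵀ * R) := by
    nth_rw 1 [← transpose_transpose X]
    rw [hX, transpose_smul, Matrix.smul_mul, Matrix.mul_smul, smul_smul,
      Real.mul_self_sqrt hn.le, transpose_mul_self_of_transpose_mul_eq_one hQ]
  rw [cov, hXX, smul_smul, inv_mul_cancel₀ hn.ne', one_smul]

theorem stmt_5_general {p n : ℕ} (hp : 0 < p) (hpn : p < n)
    (X : Matrix (Fin p) (Fin n) ℝ)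
    (Q : Matrix (Fin n) (Fin p) ℝ) (R : Matrix (Fin p) (Fin p) ℝ)
    (hQ : Qᵀ * Q = 1)
    (hRdet : IsUnit R.det)
    (hQR : ((n : ℝ) - 1) ^ (-(1 : ℝ)/2) • Xᵀ = Q * R)
    (S : Matrix (Fin p) (Fin p) ℝ)
    (hS : S.PosSemidef)
    (hSsq : S * S = cov X) :
    Xᵀ * S⁻¹ = Real.sqrt ((n : ℝ) - 1) • (Q * (S * R⁻¹)ᵀ) ∧
    S⁻¹ * X = Real.sqrt ((n : ℝ) - 1) • ((S * R⁻¹) * Qᵀ) := by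
  have hn : (0 : ℝ) < (n : ℝ) - 1 := by
    rw [sub_pos, Nat.one_lt_cast]
    omega
  have hX : Xᵀ = √((n : ℝ) - 1) • (Q * R) := by
    rw [← hQR, Real.sqrt_smul_rpow_neg_half_smul hn]
  have hSt : Sᵀ = S := hS.1
  have hW : (S * R⁻¹)ᵀ = R * S⁻¹ :=
    transpose_mul_inv_eq_mul_inv_of_transpose_mul_self_eq
      (by rw [hSt, hSsq, cov_eq_transpose_mul_self_of_qr hn hQ hX]) hRdet
  have hleft : Xᵀ * S⁻¹ = √((n : ℝ) - 1) • (Q * (S * R⁻¹)ᵀ) := by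
    rw [hX, hW, smul_mul, Matrix.mul_assoc]
  refine ⟨hleft, ?_⟩
  simpa only [transpose_mul, transpose_smul, transpose_transpose, transpose_nonsing_inv, hSt]
    using congrArg transpose hleft

/-- With `S = cov(X)^{1/2}` the positive semidefinite symmetric square root of the
covariance matrix, `W = S * R⁻¹` orthogonal, and `cov(X)^{-1/2} = S⁻¹`, one has
`Xᵀ * cov(X)^{-1/2} = √(n-1) • (Q * Wᵀ)` and `cov(X)^{-1/2} * X = √(n-1) • (W * Qᵀ)`. -/
theorem stmt_5 {p n : ℕ} (hp : 0 < p) (hpn : p < n)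
    (X : Matrix (Fin p) (Fin n) ℝ)
    (hXc : X *ᵥ (fun _ => (1 : ℝ)) = 0)
    (Q : Matrix (Fin n) (Fin p) ℝ) (R : Matrix (Fin p) (Fin p) ℝ)
    (hQ : Qᵀ * Q = 1)
    (hR : R.BlockTriangular id)
    (hRdet : IsUnit R.det)
    (hQR : ((n : ℝ) - 1) ^ (-(1 : ℝ)/2) • Xᵀ = Q * R)
    (S : Matrix (Fin p) (Fin p) ℝ)
    (hS : S.PosSemidef)
    (hSsq : S * S = cov X) :
    Xᵀ * S⁻¹ = Real.sqrt ((n : ℝ) - 1) • (Q * (S * R⁻¹)ᵀ) ∧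
    S⁻¹ * X = Real.sqrt ((n : ℝ) - 1) • ((S * R⁻¹) * Qᵀ) :=
  stmt_5_general hp hpn X Q R hQ hRdet hQR S hS hSsq
end

section
/- Let p, n be natural numbers with 0 < p < n, let X be a centered p×n real data matrix with QR factorization (1/√(n−1)) • Xᵀ = Q * R where Qᵀ * Q = 1 and R is upper triangular and invertible, and let w : ℝ → ℝ. Then the ICS matrix M(X) = cov(X)^{−1/2} * cov_w(X) * cov(X)^{−1/2} satisfies M(X) = (((n:ℝ)−1)/n) • W * Qᵀ * Matrix.diagonal (fun i => w(((n:ℝ)−1) * q i)) * Q * Wᵀ, where W = cov(X)^{1/2} * R⁻¹ is orthogonal and q i = ∑ j, (Q i j)^2. -/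
/-!
The QR factorization expresses everything through `Q` and `R`: writing `X = c • (Q * R)ᵀ` with
`c ^ 2 = n - 1`, one gets `cov X = Rᵀ * R`, so the Mahalanobis distances are `n - 1` times the
diagonal of `Q * Qᵀ`, i.e. the leverage scores, and `cov_w X = ((n - 1) / n) • Rᵀ Qᵀ D Q R`.
A symmetric square root `S` of `Rᵀ * R` satisfies `S⁻¹ * Rᵀ = S * R⁻¹ = W`, so conjugating
by `S⁻¹` turns `Rᵀ * A * R` into `W * A * Wᵀ`.
-/

open Matrix

namespace Matrix

variable {m ι α : Type*} [CommRing α]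

theorem sum_smul_vecMulVec_col [Fintype ι] [DecidableEq ι] (A : Matrix m ι α) (d : ι → α) :
    ∑ i, d i • vecMulVec (fun k => A k i) (fun k => A k i) = A * diagonal d * Aᵀ := by
  ext k l
  rw [mul_apply]
  simp only [sum_apply, smul_apply, vecMulVec_apply, mul_diagonal, transpose_apply, smul_eq_mul]
  exact Finset.sum_congr rfl fun i _ => by ring

theorem col_dotProduct_mulVec_col [Fintype m] (A : Matrix m ι α) (M : Matrix m m α) (i : ι) :
    (fun k => A k i) ⬝ᵥ (M *ᵥ fun k => A k i) = (Aᵀ * M * A) i i := by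
  simp only [dotProduct, mulVec, mul_apply, transpose_apply, Finset.mul_sum, Finset.sum_mul]
  rw [Finset.sum_comm]
  exact Finset.sum_congr rfl fun _ _ => Finset.sum_congr rfl fun _ _ => by ring

variable [Fintype m] [DecidableEq m] {S R : Matrix m m α}

theorem inv_mul_transpose_eq_mul_inv (hSR : S * S = Rᵀ * R) (hR : IsUnit R.det) :
    S⁻¹ * Rᵀ = S * R⁻¹ := by
  have hS : IsUnit S.det := by
    have h : IsUnit (S.det * S.det) := by
      rw [← det_mul, hSR, det_mul, det_transpose]
      exact hR.mul hR
    exact isUnit_of_mul_isUnit_left h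
  calc S⁻¹ * Rᵀ = S⁻¹ * (Rᵀ * R) * R⁻¹ := by
        rw [Matrix.mul_assoc S⁻¹, Matrix.mul_assoc, mul_nonsing_inv R hR, Matrix.mul_one]
    _ = S * R⁻¹ := by rw [← hSR, ← Matrix.mul_assoc, nonsing_inv_mul S hS, Matrix.one_mul]

theorem inv_mul_transpose_mul_mul_mul_inv (hS : S.IsSymm) (hSR : S * S = Rᵀ * R) (hR : IsUnit R.det)
    (A : Matrix m m α) :
    S⁻¹ * (Rᵀ * A * R) * S⁻¹ = (S * R⁻¹) * A * (S * R⁻¹)ᵀ := by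
  have hW := inv_mul_transpose_eq_mul_inv hSR hR
  have hWt : R * S⁻¹ = (S * R⁻¹)ᵀ := by
    rw [← hW, transpose_mul, transpose_nonsing_inv, hS.eq, transpose_transpose]
  rw [← hWt, ← hW]
  simp only [Matrix.mul_assoc]

end Matrix

section QR

variable {p n : ℕ} {X : Matrix (Fin p) (Fin n) ℝ} {Q : Matrix (Fin n) (Fin p) ℝ}
  {R : Matrix (Fin p) (Fin p) ℝ} {c : ℝ}

theorem cov_eq_of_qr (hn : (n : ℝ) - 1 ≠ 0) (hc : c ^ 2 = n - 1) (hQ : Qᵀ * Q = 1)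
    (hX : X = c • (Q * R)ᵀ) :
    cov X = Rᵀ * R := by
  subst hX
  simp only [cov, transpose_smul, transpose_transpose, Matrix.smul_mul, Matrix.mul_smul,
    smul_smul, ← sq, hc, inv_mul_cancel₀ hn, one_smul]
  rw [transpose_mul, Matrix.mul_assoc, ← Matrix.mul_assoc Qᵀ, hQ, Matrix.one_mul]

theorem mahalanobisSq_eq_of_qr (hn : (n : ℝ) - 1 ≠ 0) (hc : c ^ 2 = n - 1) (hQ : Qᵀ * Q = 1)
    (hR : IsUnit R.det) (hX : X = c • (Q * R)ᵀ) (i : Fin n) :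
    mahalanobisSq X i = ((n : ℝ) - 1) * ∑ j, Q i j ^ 2 := by
  have hRR : R * (Rᵀ * R)⁻¹ * Rᵀ = 1 := by
    rw [Matrix.mul_inv_rev, ← Matrix.mul_assoc, mul_nonsing_inv R hR, Matrix.one_mul,
      nonsing_inv_mul _ (by rwa [det_transpose])]
  have hmat : Xᵀ * (cov X)⁻¹ * X = ((n : ℝ) - 1) • (Q * Qᵀ) := by
    rw [cov_eq_of_qr hn hc hQ hX]
    subst hX
    simp only [transpose_smul, transpose_transpose, Matrix.smul_mul, Matrix.mul_smul, smul_smul,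
      ← sq, hc, transpose_mul]
    congr 1
    calc Q * R * (Rᵀ * R)⁻¹ * (Rᵀ * Qᵀ) = Q * (R * (Rᵀ * R)⁻¹ * Rᵀ) * Qᵀ := by
          simp only [Matrix.mul_assoc]
      _ = Q * Qᵀ := by rw [hRR, Matrix.mul_one]
  rw [mahalanobisSq, col_dotProduct_mulVec_col, hmat]
  simp [mul_apply, sq]

theorem covW_eq_of_qr (hn : (n : ℝ) - 1 ≠ 0) (hc : c ^ 2 = n - 1) (hQ : Qᵀ * Q = 1)
    (hR : IsUnit R.det) (hX : X = c • (Q * R)ᵀ) (w : ℝ → ℝ) :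
    covW w X = (((n : ℝ) - 1) / n) •
      (Rᵀ * (Qᵀ * diagonal (fun i => w (((n : ℝ) - 1) * ∑ j, Q i j ^ 2)) * Q) * R) := by
  simp only [covW, mahalanobisSq_eq_of_qr hn hc hQ hR hX, sum_smul_vecMulVec_col]
  subst hX
  simp only [transpose_smul, transpose_transpose, Matrix.smul_mul, Matrix.mul_smul, smul_smul,
    ← sq, hc, transpose_mul, div_eq_inv_mul, Matrix.mul_assoc]

end QR

theorem stmt_6_general {p n : ℕ} (hp : 0 < p) (hpn : p < n)
    (X : Matrix (Fin p) (Fin n) ℝ)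
    (Q : Matrix (Fin n) (Fin p) ℝ) (R : Matrix (Fin p) (Fin p) ℝ)
    (hQ : Qᵀ * Q = 1)
    (hRdet : IsUnit R.det)
    (hQR : ((n : ℝ) - 1) ^ (-(1 : ℝ)/2) • Xᵀ = Q * R)
    (w : ℝ → ℝ)
    (S : Matrix (Fin p) (Fin p) ℝ)
    (hS : S.PosSemidef)
    (hSsq : S * S = cov X) :
    S⁻¹ * covW w X * S⁻¹ =
      (((n : ℝ) - 1) / (n : ℝ)) •
        ((S * R⁻¹) * Qᵀ * Matrix.diagonal (fun i => w (((n : ℝ) - 1) * ∑ j, (Q i j) ^ 2)) *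
          Q * (S * R⁻¹)ᵀ) := by
  have hn : (0 : ℝ) < n - 1 := by
    have : (1 : ℝ) < n := by exact_mod_cast (show 1 < n by omega)
    linarith
  set s : ℝ := ((n : ℝ) - 1) ^ (-(1 : ℝ)/2)
  have hs : s ≠ 0 := (Real.rpow_pos_of_pos hn _).ne'
  have hc : s⁻¹ ^ 2 = n - 1 := by
    rw [← Real.rpow_natCast, ← Real.rpow_neg_one, ← Real.rpow_mul hn.le, ← Real.rpow_mul hn.le]
    norm_num
  have hX : X = s⁻¹ • (Q * R)ᵀ := by
    rw [← hQR, transpose_smul, transpose_transpose, smul_smul, inv_mul_cancel₀ hs, one_smul]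
  have hSR : S * S = Rᵀ * R := hSsq.trans (cov_eq_of_qr hn.ne' hc hQ hX)
  rw [covW_eq_of_qr hn.ne' hc hQ hRdet hX, Matrix.mul_smul, Matrix.smul_mul,
    inv_mul_transpose_mul_mul_mul_inv (isHermitian_iff_isSymm.mp hS.isHermitian) hSR hRdet]
  simp only [Matrix.mul_assoc]

/-- The ICS matrix `M(X) = cov(X)^{-1/2} * cov_w(X) * cov(X)^{-1/2}` equals
`((n-1)/n) • W * Qᵀ * Diag(w((n-1) q_i)) * Q * Wᵀ` where `W = cov(X)^{1/2} * R⁻¹`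
is orthogonal and `q i = ∑ j, (Q i j)^2` are the leverage scores. -/
theorem stmt_6 {p n : ℕ} (hp : 0 < p) (hpn : p < n)
    (X : Matrix (Fin p) (Fin n) ℝ)
    (hXc : X *ᵥ (fun _ => (1 : ℝ)) = 0)
    (Q : Matrix (Fin n) (Fin p) ℝ) (R : Matrix (Fin p) (Fin p) ℝ)
    (hQ : Qᵀ * Q = 1)
    (hR : R.BlockTriangular id)
    (hRdet : IsUnit R.det)
    (hQR : ((n : ℝ) - 1) ^ (-(1 : ℝ)/2) • Xᵀ = Q * R)
    (w : ℝ → ℝ)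
    (S : Matrix (Fin p) (Fin p) ℝ)
    (hS : S.PosSemidef)
    (hSsq : S * S = cov X) :
    S⁻¹ * covW w X * S⁻¹ =
      (((n : ℝ) - 1) / (n : ℝ)) •
        ((S * R⁻¹) * Qᵀ * Matrix.diagonal (fun i => w (((n : ℝ) - 1) * ∑ j, (Q i j) ^ 2)) *
          Q * (S * R⁻¹)ᵀ) :=
  stmt_6_general hp hpn X Q R hQ hRdet hQR w S hS hSsq
end

section
/- Let R be a p×p real upper triangular matrix satisfying the Businger–Golub pivoting condition, and let q < p. Let R₂₂ denote the trailing (p−q)×(p−q) block of R consisting of entries R k j with k, j > q (indices beyond position q). Then the Frobenius norm of R₂₂ is bounded by ‖R₂₂‖_F ≤ √(p−q) · |R (q+1) (q+1)|, where R (q+1) (q+1) is the (q+1)-st diagonal entry of R. -/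
/-!
Since `R` is upper triangular, the part of column `j` from row `i` down is the segment
`R i j, …, R j j`, whose squared norm the pivoting condition bounds by `R i i ^ 2`.
Summing over the `p - q` trailing columns bounds `‖R₂₂‖_F ^ 2` by `(p - q) * R q q ^ 2`.
-/

open Matrix Finset

namespace Matrix

variable {α : Type*} [LinearOrder α] [LocallyFiniteOrder α] [LocallyFiniteOrderTop α]

theorem BlockTriangular.sum_Ici_sq_eq_sum_Icc {S : Type*} [Semiring S] {R : Matrix α α S}
    (hR : R.BlockTriangular id) (i j : α) :
    ∑ k ∈ Ici i, R k j ^ 2 = ∑ k ∈ Icc i j, R k j ^ 2 := by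
  refine (sum_subset Icc_subset_Ici_self fun k hk hkj => ?_).symm
  have hjk : j < k := lt_of_not_ge fun h => hkj (mem_Icc.2 ⟨mem_Ici.1 hk, h⟩)
  simp [hR hjk]

theorem BlockTriangular.sum_Ici_sq_le {R : Matrix α α ℝ} (hR : R.BlockTriangular id)
    (hBG : ∀ i j, i ≤ j → ∑ k ∈ Icc i j, R k j ^ 2 ≤ R i i ^ 2) {i j : α} (hij : i ≤ j) :
    ∑ k ∈ Ici i, R k j ^ 2 ≤ R i i ^ 2 :=
  hR.sum_Ici_sq_eq_sum_Icc i j ▸ hBG i j hij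

theorem BlockTriangular.sum_Ici_sum_Ici_sq_le {R : Matrix α α ℝ} (hR : R.BlockTriangular id)
    (hBG : ∀ i j, i ≤ j → ∑ k ∈ Icc i j, R k j ^ 2 ≤ R i i ^ 2) (i : α) :
    ∑ j ∈ Ici i, ∑ k ∈ Ici i, R k j ^ 2 ≤ #(Ici i) * R i i ^ 2 := by
  simpa using sum_le_sum fun j hj => hR.sum_Ici_sq_le hBG (mem_Ici.1 hj)

end Matrix

/-- For an upper triangular matrix `R` satisfying the Businger–Golub pivoting condition
and `q < p`, the Frobenius norm of the trailing `(p-q) × (p-q)` block `R₂₂` of `R`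
(the entries beyond position `q`) is bounded by `√(p-q) · |R_{q+1,q+1}|`, where
`R_{q+1,q+1}` is the `(q+1)`-st diagonal entry of `R` (index `q` counting from zero). -/
theorem stmt_12 {p : ℕ} (R : Matrix (Fin p) (Fin p) ℝ)
    (hR : R.BlockTriangular id)
    (hBG : ∀ i j : Fin p, i ≤ j → ∑ k ∈ Finset.Icc i j, (R k j) ^ 2 ≤ (R i i) ^ 2)
    (q : ℕ) (hq : q < p) :
    Real.sqrt (∑ k : Fin p, ∑ j : Fin p,
        if q ≤ (k : ℕ) ∧ q ≤ (j : ℕ) then (R k j) ^ 2 else 0) ≤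
      Real.sqrt ((p : ℝ) - (q : ℝ)) * |R ⟨q, hq⟩ ⟨q, hq⟩| := by
  set i : Fin p := ⟨q, hq⟩
  have hblock : (∑ k : Fin p, ∑ j : Fin p, if q ≤ (k : ℕ) ∧ q ≤ (j : ℕ) then R k j ^ 2 else 0) =
      ∑ j ∈ Ici i, ∑ k ∈ Ici i, R k j ^ 2 := by
    have hmem : ∀ k : Fin p, q ≤ (k : ℕ) ↔ k ∈ Ici i := fun k => by simp [i, Fin.le_def]
    rw [sum_comm]
    simp only [hmem, ite_and, sum_ite_mem, univ_inter, sum_ite_irrel, sum_const_zero]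
  have hcard : (#(Ici i) : ℝ) = p - q := by
    rw [Fin.card_Ici, Nat.cast_sub hq.le]
  have hsum := hR.sum_Ici_sum_Ici_sq_le hBG i
  rw [← hblock, hcard] at hsum
  calc _ ≤ √((p - q) * R i i ^ 2) := Real.sqrt_le_sqrt hsum
    _ = _ := by rw [Real.sqrt_mul (sub_nonneg.2 (mod_cast hq.le)), Real.sqrt_sq_eq_abs]
end

section
/- (Existence of the QR factorization with Businger–Golub column pivoting) Let A be an n×p real matrix with p ≤ n. Then there exist a permutation σ of Fin p, a matrix Q : Matrix (Fin n) (Fin p) ℝ with orthonormal columns (Qᵀ * Q = 1), and an upper triangular matrix R : Matrix (Fin p) (Fin p) ℝ such that the column-permuted matrix A·Π (with Π the permutation matrix of σ) equals Q * R and R satisfies the Businger–Golub condition: for all i ≤ j, ∑_{k=i}^{j} (R k j)^2 ≤ (R i i)^2. -/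
/-!
Gram–Schmidt with column pivoting, carried out in an arbitrary finite-dimensional real inner
product space. Move a column `w₀` of maximal norm to the front and pick a unit vector `u` with
`w₀ = ‖w₀‖ • u` (if `w₀ = 0` every column vanishes and any unit vector will do). Project the other
columns onto `uᗮ`, whose dimension is one less, and factor them recursively. A column `x` of the
result then has first-row entry `⟪u, x⟫` and the rest of its entries have squared sum
`‖proj x‖²`, so by Pythagoras its squared norm is `‖x‖² ≤ ‖w₀‖² = R₀₀²`: this is the
Businger–Golub condition for the first row, and the other rows inherit it from the recursion.
-/

open Matrix
open scoped InnerProductSpace RealInnerProductSpace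

namespace Matrix

variable {p : ℕ}

def IsBusingerGolub (R : Matrix (Fin p) (Fin p) ℝ) : Prop :=
  ∀ i j, i ≤ j → ∑ k ∈ Finset.Icc i j, R k j ^ 2 ≤ R i i ^ 2

/-- The block matrix `!![r, c; 0, R]`. -/
def upperBordered {α : Type*} [Zero α] (r : α) (c : Fin p → α) (R : Matrix (Fin p) (Fin p) α) :
    Matrix (Fin (p + 1)) (Fin (p + 1)) α :=
  of (Fin.cons (Fin.cons r c) fun i => Fin.cons 0 (R i))

section upperBordered

variable {α : Type*} [Zero α] (r : α) (c : Fin p → α) (R : Matrix (Fin p) (Fin p) α)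

@[simp] lemma upperBordered_zero_zero : upperBordered r c R 0 0 = r := rfl

@[simp] lemma upperBordered_zero_succ (j : Fin p) : upperBordered r c R 0 j.succ = c j := rfl

@[simp] lemma upperBordered_succ_zero (i : Fin p) : upperBordered r c R i.succ 0 = 0 := rfl

@[simp] lemma upperBordered_succ_succ (i j : Fin p) :
    upperBordered r c R i.succ j.succ = R i j := rfl

lemma BlockTriangular.upperBordered {R : Matrix (Fin p) (Fin p) α}
    (hR : R.BlockTriangular id) : (upperBordered r c R).BlockTriangular id := by
  intro i j hji
  induction i using Fin.cases with
  | zero => exact absurd hji (Fin.not_lt_zero _)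
  | succ i =>
    induction j using Fin.cases with
    | zero => rfl
    | succ j => exact hR (Fin.succ_lt_succ_iff.mp hji)

end upperBordered

section sum

variable {α M : Type*} [Semiring α] [AddCommMonoid M] [Module α M]
  (r : α) (c : Fin p → α) (R : Matrix (Fin p) (Fin p) α) (q₀ : M) (q : Fin p → M)

lemma sum_upperBordered_smul_zero :
    ∑ k, upperBordered r c R k 0 • (Fin.cons q₀ q : Fin (p + 1) → M) k = r • q₀ := by
  simp [Fin.sum_univ_succ]

lemma sum_upperBordered_smul_succ (j : Fin p) :
    ∑ k, upperBordered r c R k j.succ • (Fin.cons q₀ q : Fin (p + 1) → M) k =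
      c j • q₀ + ∑ k, R k j • q k := by
  simp [Fin.sum_univ_succ]

end sum

lemma IsBusingerGolub.upperBordered {r : ℝ} {c : Fin p → ℝ} {R : Matrix (Fin p) (Fin p) ℝ}
    (hR : R.IsBusingerGolub) (hr : ∀ j, c j ^ 2 + ∑ k, R k j ^ 2 ≤ r ^ 2) :
    (upperBordered r c R).IsBusingerGolub := by
  intro i j hij
  induction i using Fin.cases with
  | zero =>
    induction j using Fin.cases with
    | zero => simp
    | succ j =>
      calc ∑ k ∈ Finset.Icc 0 j.succ, Matrix.upperBordered r c R k j.succ ^ 2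
          ≤ ∑ k, Matrix.upperBordered r c R k j.succ ^ 2 :=
            Finset.sum_le_sum_of_subset_of_nonneg (Finset.subset_univ _)
              fun _ _ _ => sq_nonneg _
        _ = c j ^ 2 + ∑ k, R k j ^ 2 := by simp [Fin.sum_univ_succ]
        _ ≤ _ := hr j
  | succ i =>
    induction j using Fin.cases with
    | zero => exact absurd hij (Fin.succ_pos i).not_ge
    | succ j =>
      rw [← Fin.finsetImage_succ_Icc, Finset.sum_image (Fin.succ_injective _).injOn]
      simpa using hR i j (Fin.succ_le_succ_iff.mp hij)

end Matrix

section

variable {𝕜 E : Type*} [RCLike 𝕜] [NormedAddCommGroup E] [InnerProductSpace 𝕜 E] {p : ℕ}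

theorem Orthonormal.finCons {q₀ : E} {q : Fin p → E} (hq₀ : ‖q₀‖ = 1) (hq : Orthonormal 𝕜 q)
    (hq₀q : ∀ k, ⟪q₀, q k⟫_𝕜 = 0) : Orthonormal 𝕜 (Fin.cons q₀ q : Fin (p + 1) → E) := by
  refine ⟨fun k => Fin.cases hq₀ hq.1 k, fun k l hkl => ?_⟩
  induction k using Fin.cases with
  | zero =>
    induction l using Fin.cases with
    | zero => exact absurd rfl hkl
    | succ l => exact hq₀q l
  | succ k =>
    induction l using Fin.cases with
    | zero => simpa [inner_eq_zero_symm] using hq₀q k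
    | succ l => exact hq.2 (hkl ∘ congrArg Fin.succ)

end

variable {E : Type*} [NormedAddCommGroup E] [InnerProductSpace ℝ E]

theorem Orthonormal.norm_sum_smul_sq {ι : Type*} [Fintype ι] {q : ι → E} (hq : Orthonormal ℝ q)
    (l : ι → ℝ) : ‖∑ k, l k • q k‖ ^ 2 = ∑ k, l k ^ 2 := by
  rw [← real_inner_self_eq_norm_sq, hq.inner_sum]
  simp [sq]

theorem exists_norm_eq_one_smul_eq [Nontrivial E] (x : E) : ∃ u : E, ‖u‖ = 1 ∧ ‖x‖ • u = x := by
  rcases eq_or_ne x 0 with rfl | hx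
  · obtain ⟨u, hu⟩ := exists_norm_eq E zero_le_one
    exact ⟨u, hu, by simp⟩
  · exact ⟨‖x‖⁻¹ • x, norm_smul_inv_norm hx, by simp [smul_smul, hx]⟩

section unit

variable {u : E}

theorem inner_smul_add_starProjection_orthogonal_singleton (hu : ‖u‖ = 1) (x : E) :
    ⟪u, x⟫ • u + (ℝ ∙ u)ᗮ.starProjection x = x := by
  rw [← Submodule.starProjection_unit_singleton ℝ hu,
    Submodule.starProjection_add_starProjection_orthogonal]

theorem sq_inner_add_norm_orthogonalProjectionOnto_orthogonal_singleton_sq (hu : ‖u‖ = 1)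
    (x : E) : ⟪u, x⟫ ^ 2 + ‖(ℝ ∙ u)ᗮ.orthogonalProjectionOnto x‖ ^ 2 = ‖x‖ ^ 2 := by
  have hproj : ‖(ℝ ∙ u).orthogonalProjectionOnto x‖ = |⟪u, x⟫| := by
    rw [← Submodule.norm_coe, ← Submodule.starProjection_apply,
      Submodule.starProjection_unit_singleton ℝ hu, norm_smul, hu, mul_one, Real.norm_eq_abs]
  rw [Submodule.norm_sq_eq_add_norm_sq_projection x (ℝ ∙ u), hproj, sq_abs]

end unit

variable {p : ℕ}

structure PivotedQR (v : Fin p → E) where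
  σ : Equiv.Perm (Fin p)
  q : Fin p → E
  R : Matrix (Fin p) (Fin p) ℝ
  orthonormal : Orthonormal ℝ q
  blockTriangular : R.BlockTriangular id
  apply_perm : ∀ j, v (σ j) = ∑ k, R k j • q k
  isBusingerGolub : R.IsBusingerGolub

namespace PivotedQR

def ofFinZero (v : Fin 0 → E) : PivotedQR v where
  σ := 1
  q := finZeroElim
  R := 0
  orthonormal := .of_isEmpty _
  blockTriangular _ _ _ := rfl
  apply_perm := finZeroElim
  isBusingerGolub := finZeroElim

def permute {v : Fin p → E} (τ : Equiv.Perm (Fin p)) (Q : PivotedQR (v ∘ τ)) : PivotedQR v :=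
  { Q with
    σ := τ * Q.σ
    apply_perm := Q.apply_perm }

def cons {w : Fin (p + 1) → E} {u : E} (hu : ‖u‖ = 1) (hw₀ : ‖w 0‖ • u = w 0)
    (hw : ∀ j, ‖w j‖ ≤ ‖w 0‖)
    (Q : PivotedQR fun j => (ℝ ∙ u)ᗮ.orthogonalProjectionOnto (w j.succ)) : PivotedQR w where
  σ := Equiv.Perm.decomposeFin.symm (0, Q.σ)
  q := Fin.cons u fun k => Q.q k
  R := upperBordered ‖w 0‖ (fun j => ⟪u, w (Q.σ j).succ⟫) Q.R
  orthonormal :=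
    .finCons hu (Q.orthonormal.comp_linearIsometry (ℝ ∙ u)ᗮ.subtypeₗᵢ)
      fun k => Submodule.inner_right_of_mem_orthogonal (Submodule.mem_span_singleton_self u)
        (Q.q k).2
  blockTriangular := Q.blockTriangular.upperBordered _ _
  apply_perm j := by
    induction j using Fin.cases with
    | zero => simpa [sum_upperBordered_smul_zero] using hw₀.symm
    | succ j =>
      have hQ := congrArg Subtype.val (Q.apply_perm j)
      simp only [Submodule.coe_sum, Submodule.coe_smul] at hQ
      simp only [Equiv.Perm.decomposeFin_symm_apply_succ, Equiv.swap_self, Equiv.refl_apply,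
        sum_upperBordered_smul_succ, ← hQ]
      exact (inner_smul_add_starProjection_orthogonal_singleton hu _).symm
  isBusingerGolub := by
    refine Q.isBusingerGolub.upperBordered fun j => ?_
    have hQ := congrArg (‖·‖ ^ 2) (Q.apply_perm j)
    simp only [Q.orthonormal.norm_sum_smul_sq] at hQ
    rw [← hQ, sq_inner_add_norm_orthogonalProjectionOnto_orthogonal_singleton_sq hu]
    exact pow_le_pow_left₀ (norm_nonneg _) (hw _) 2

theorem nonempty [FiniteDimensional ℝ E] (v : Fin p → E)
    (hp : p ≤ Module.finrank ℝ E) : Nonempty (PivotedQR v) := by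
  induction p generalizing E with
  | zero => exact ⟨ofFinZero v⟩
  | succ p ih =>
    have : Nontrivial E := Module.nontrivial_of_finrank_pos (R := ℝ) (by omega)
    obtain ⟨j₀, hj₀⟩ := Finite.exists_max fun j => ‖v j‖
    set w := v ∘ Equiv.swap 0 j₀
    have hw : ∀ j, ‖w j‖ ≤ ‖w 0‖ := fun j => by simpa [w] using hj₀ _
    obtain ⟨u, hu, hwu⟩ := exists_norm_eq_one_smul_eq (w 0)
    have hK : p ≤ Module.finrank ℝ (ℝ ∙ u)ᗮ := by
      have := (ℝ ∙ u).finrank_add_finrank_orthogonal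
      rw [finrank_span_singleton (norm_ne_zero_iff.mp (hu.trans_ne one_ne_zero))] at this
      omega
    obtain ⟨Q⟩ := ih _ hK
    exact ⟨(cons hu hwu hw Q).permute _⟩

end PivotedQR

theorem Matrix.transpose_mul_self_eq_one_of_orthonormal {m ι : Type*} [Fintype m]
    [DecidableEq ι] {q : ι → EuclideanSpace ℝ m} (hq : Orthonormal ℝ q) :
    (of fun i k => q k i)ᵀ * of (fun i k => q k i) = 1 := by
  rw [← conjTranspose_eq_transpose_of_trivial, ← gram_eq_one_iff_orthonormal.mpr hq,
    gram_eq_conjTranspose_mul (EuclideanSpace.basisFun m ℝ)]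
  rfl

/-- Existence of the QR factorization with Businger–Golub column pivoting: for any
`n × p` real matrix `A` with `p ≤ n` there exist a permutation `σ` of the columns,
a matrix `Q` with orthonormal columns and an upper triangular matrix `R` such that the
column-permuted matrix `A·Π` (whose `j`-th column is the `σ j`-th column of `A`, i.e.
`A.submatrix id σ`) equals `Q * R`, and `R` satisfies the Businger–Golub condition. -/
theorem stmt_13 {n p : ℕ} (hpn : p ≤ n) (A : Matrix (Fin n) (Fin p) ℝ) :
    ∃ (σ : Equiv.Perm (Fin p)) (Q : Matrix (Fin n) (Fin p) ℝ)
      (R : Matrix (Fin p) (Fin p) ℝ),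
      Qᵀ * Q = 1 ∧
      R.BlockTriangular id ∧
      A.submatrix id σ = Q * R ∧
      ∀ i j : Fin p, i ≤ j → ∑ k ∈ Finset.Icc i j, (R k j) ^ 2 ≤ (R i i) ^ 2 := by
  obtain ⟨QR⟩ := PivotedQR.nonempty (fun j => WithLp.toLp 2 (Aᵀ j)) (by simpa using hpn)
  refine ⟨QR.σ, of fun i k => QR.q k i, QR.R,
    transpose_mul_self_eq_one_of_orthonormal QR.orthonormal, QR.blockTriangular, ?_,
    QR.isBusingerGolub⟩
  ext i j
  have := congrArg (· i) (QR.apply_perm j)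
  simpa [mul_apply, mul_comm] using this
end

section
/- (Rank-revealing truncation) Let A be an n×p real matrix with p ≤ n, and suppose A = Q * R where Q : Matrix (Fin n) (Fin p) ℝ satisfies Qᵀ * Q = 1 and R is upper triangular satisfying the Businger–Golub condition. Then for every q < p there exists a matrix A' : Matrix (Fin n) (Fin p) ℝ with rank A' ≤ q such that ‖A − A'‖_F ≤ √(p−q) · |R (q+1) (q+1)|, where ‖·‖_F is the Frobenius norm. (A' is obtained by replacing the trailing block R₂₂ of R by zero.) -/
/-!
Split `R = R₁ + R₂`, with `R₁` the first `q` rows of `R` and `R₂` the remaining ones, and take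
`A' = Q R₁`, of rank at most `q`. Since `Q` has orthonormal columns, `‖A - A'‖_F = ‖R₂‖_F`.
As `R` is upper triangular, column `j ≥ q` of `R₂` is supported on rows `q, …, j`, so the
Businger–Golub condition bounds its squared norm by `R_{qq}²`; the columns `j < q` of `R₂`
vanish. Summing over the `p - q` remaining columns gives `‖R₂‖_F² ≤ (p - q) R_{qq}²`.
-/

open Matrix Finset

namespace Matrix

section RowRestrict

variable {m n α : Type*} [DecidableEq m]

def rowRestrict [Zero α] (s : Finset m) (M : Matrix m n α) : Matrix m n α :=
  of fun i j => if i ∈ s then M i j else 0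

theorem rowRestrict_eq_diagonal_mul [Fintype m] [NonAssocSemiring α] (s : Finset m)
    (M : Matrix m n α) :
    rowRestrict s M = diagonal (fun i => if i ∈ s then (1 : α) else 0) * M := by
  ext i j
  by_cases hi : i ∈ s <;> simp [rowRestrict, diagonal_mul, hi]

theorem rank_rowRestrict_le {K : Type*} [Field K] [Fintype m] [Fintype n] (s : Finset m)
    (M : Matrix m n K) :
    (rowRestrict s M).rank ≤ #s := by
  classical
  calc (rowRestrict s M).rank
      ≤ (diagonal fun i => if i ∈ s then (1 : K) else 0).rank := by
        rw [rowRestrict_eq_diagonal_mul]; exact rank_mul_le_left _ _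
    _ = #s := by
        rw [rank_diagonal, Fintype.card_subtype]
        congr 1
        ext i
        simp

theorem sub_rowRestrict [Fintype m] [AddGroup α] (s : Finset m) (M : Matrix m n α) :
    M - rowRestrict s M = rowRestrict sᶜ M := by
  ext i j
  by_cases hi : i ∈ s <;> simp [rowRestrict, hi]

end RowRestrict

section OrthonormalColumns

variable {m n k R : Type*} [Fintype m] [Fintype n] [Fintype k] [CommSemiring R]

theorem sum_sq_entries_eq_trace (B : Matrix m n R) :
    ∑ i, ∑ j, B i j ^ 2 = (Bᵀ * B).trace := by
  simp only [trace, diag, mul_apply, transpose_apply, sq]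
  exact sum_comm

theorem sum_sq_entries_mul_of_transpose_mul_self [DecidableEq n] {Q : Matrix m n R}
    (hQ : Qᵀ * Q = 1) (M : Matrix n k R) :
    ∑ i, ∑ j, (Q * M) i j ^ 2 = ∑ i, ∑ j, M i j ^ 2 := by
  rw [sum_sq_entries_eq_trace, sum_sq_entries_eq_trace, transpose_mul, Matrix.mul_assoc,
    ← Matrix.mul_assoc Qᵀ, hQ, Matrix.one_mul]

end OrthonormalColumns

section UpperTriangular

variable {ι : Type*} [LinearOrder ι] [Fintype ι] [LocallyFiniteOrder ι]
  [LocallyFiniteOrderTop ι] {R : Matrix ι ι ℝ}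

theorem BlockTriangular.sum_sq_rowRestrict_Ici (hR : R.BlockTriangular id) (a j : ι) :
    ∑ i, rowRestrict (Ici a) R i j ^ 2 = ∑ i ∈ Icc a j, R i j ^ 2 := by
  rw [← sum_subset (subset_univ _) fun i _ hi => ?_]
  · refine sum_congr rfl fun i hi => ?_
    simp [rowRestrict, (mem_Icc.1 hi).1]
  · simp only [mem_Icc, not_and_or, not_le] at hi
    rcases hi with hia | hji
    · simp [rowRestrict, hia]
    · simp [rowRestrict, hR hji]

theorem BlockTriangular.sum_sq_rowRestrict_Ici_le (hR : R.BlockTriangular id)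
    (hBG : ∀ i j : ι, i ≤ j → ∑ k ∈ Icc i j, R k j ^ 2 ≤ R i i ^ 2) (a : ι) :
    ∑ i, ∑ j, rowRestrict (Ici a) R i j ^ 2 ≤ #(Ici a) * R a a ^ 2 := by
  have hcol (j : ι) (hj : j ∉ Ici a) : ∑ i ∈ Icc a j, R i j ^ 2 = 0 := by
    rw [Icc_eq_empty (by simpa using hj), sum_empty]
  calc ∑ i, ∑ j, rowRestrict (Ici a) R i j ^ 2
        = ∑ j ∈ Ici a, ∑ i ∈ Icc a j, R i j ^ 2 := by
        rw [sum_comm, sum_subset (subset_univ _) fun j _ hj => hcol j hj]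
        exact sum_congr rfl fun j _ => hR.sum_sq_rowRestrict_Ici a j
    _ ≤ ∑ _j ∈ Ici a, R a a ^ 2 := sum_le_sum fun j hj => hBG a j (mem_Ici.1 hj)
    _ = #(Ici a) * R a a ^ 2 := by rw [sum_const, nsmul_eq_mul]

end UpperTriangular

end Matrix

theorem stmt_14_general {n p : ℕ}
    (A : Matrix (Fin n) (Fin p) ℝ)
    (Q : Matrix (Fin n) (Fin p) ℝ) (R : Matrix (Fin p) (Fin p) ℝ)
    (hQ : Qᵀ * Q = 1)
    (hR : R.BlockTriangular id)
    (hA : A = Q * R)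
    (hBG : ∀ i j : Fin p, i ≤ j → ∑ k ∈ Finset.Icc i j, (R k j) ^ 2 ≤ (R i i) ^ 2) :
    ∀ (q : ℕ) (hq : q < p),
      ∃ A' : Matrix (Fin n) (Fin p) ℝ,
        A'.rank ≤ q ∧
        Real.sqrt (∑ i, ∑ j, (A i j - A' i j) ^ 2) ≤
          Real.sqrt ((p : ℝ) - (q : ℝ)) * |R ⟨q, hq⟩ ⟨q, hq⟩| := by
  intro q hq
  set a : Fin p := ⟨q, hq⟩
  refine ⟨Q * rowRestrict (Iio a) R, ?_, ?_⟩
  · calc (Q * rowRestrict (Iio a) R).rank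
        ≤ (rowRestrict (Iio a) R).rank := rank_mul_le_right _ _
      _ ≤ #(Iio a) := rank_rowRestrict_le _ _
      _ = q := Fin.card_Iio a
  · have hres : A - Q * rowRestrict (Iio a) R = Q * rowRestrict (Ici a) R := by
      have hcompl : (Iio a)ᶜ = Ici a := by ext; simp
      rw [hA, ← Matrix.mul_sub, sub_rowRestrict, hcompl]
    have hbound := hR.sum_sq_rowRestrict_Ici_le hBG a
    rw [Fin.card_Ici, ← sum_sq_entries_mul_of_transpose_mul_self hQ, ← hres] at hbound
    calc √(∑ i, ∑ j, (A i j - (Q * rowRestrict (Iio a) R) i j) ^ 2)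
        ≤ √(((p - q : ℕ) : ℝ) * R a a ^ 2) := Real.sqrt_le_sqrt hbound
      _ = √((p : ℝ) - q) * |R a a| := by
        rw [Real.sqrt_mul (by positivity), Real.sqrt_sq_eq_abs, Nat.cast_sub hq.le]

/-- Rank-revealing truncation: if `A = Q * R` with `Q` having orthonormal columns and `R`
upper triangular satisfying the Businger–Golub condition, then for every `q < p` there is
a matrix `A'` of rank at most `q` with `‖A - A'‖_F ≤ √(p-q) · |R_{q+1,q+1}|` (the
`(q+1)`-st diagonal entry of `R`, index `q` counting from zero). -/
theorem stmt_14 {n p : ℕ} (hpn : p ≤ n)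
    (A : Matrix (Fin n) (Fin p) ℝ)
    (Q : Matrix (Fin n) (Fin p) ℝ) (R : Matrix (Fin p) (Fin p) ℝ)
    (hQ : Qᵀ * Q = 1)
    (hR : R.BlockTriangular id)
    (hA : A = Q * R)
    (hBG : ∀ i j : Fin p, i ≤ j → ∑ k ∈ Finset.Icc i j, (R k j) ^ 2 ≤ (R i i) ^ 2) :
    ∀ (q : ℕ) (hq : q < p),
      ∃ A' : Matrix (Fin n) (Fin p) ℝ,
        A'.rank ≤ q ∧
        Real.sqrt (∑ i, ∑ j, (A i j - A' i j) ^ 2) ≤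
          Real.sqrt ((p : ℝ) - (q : ℝ)) * |R ⟨q, hq⟩ ⟨q, hq⟩| :=
  stmt_14_general A Q R hQ hR hA hBG
end

section
/- (Affine equivariance of the one-step M-scatter matrix) Let p, n be natural numbers with 0 < p < n, let X be a centered p×n real data matrix with invertible covariance matrix cov(X), let w : ℝ → ℝ, and let A be an invertible p×p real matrix. Then cov_w(A * X) = A * cov_w(X) * Aᵀ. -/
open Matrix

/-! Since `cov (A * X) = A * cov X * Aᵀ`, the Mahalanobis distances of `A * X` equal those of `X`,
so every weight is unchanged, while each outer product `x xᵀ` of a column becomes `A (x xᵀ) Aᵀ`. -/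

lemma Matrix.col_mul {l m n R : Type*} [Fintype m] [NonUnitalNonAssocSemiring R]
    (A : Matrix l m R) (B : Matrix m n R) (j : n) :
    (fun i => (A * B) i j) = A *ᵥ fun i => B i j :=
  rfl

lemma Matrix.vecMulVec_mulVec_mulVec {l m n R : Type*} [Fintype m] [CommSemiring R]
    (A : Matrix l m R) (B : Matrix n m R) (u v : m → R) :
    vecMulVec (A *ᵥ u) (B *ᵥ v) = A * vecMulVec u v * Bᵀ := by
  rw [mul_vecMulVec, vecMulVec_mul, vecMul_transpose]

lemma Matrix.dotProduct_mulVec_inv_conj {m R : Type*} [Fintype m] [DecidableEq m] [CommRing R]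
    {A : Matrix m m R} (hA : IsUnit A.det) (M : Matrix m m R) (u v : m → R) :
    (A *ᵥ u) ⬝ᵥ ((A * M * Aᵀ)⁻¹ *ᵥ (A *ᵥ v)) = u ⬝ᵥ (M⁻¹ *ᵥ v) := by
  have hAT : IsUnit Aᵀ.det := by rwa [det_transpose]
  have hconj : Aᵀ * (A * M * Aᵀ)⁻¹ * A = M⁻¹ := by
    rw [mul_inv_rev, mul_inv_rev, ← Matrix.mul_assoc, ← Matrix.mul_assoc,
      mul_nonsing_inv _ hAT, Matrix.one_mul, Matrix.mul_assoc, nonsing_inv_mul _ hA,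
      Matrix.mul_one]
  rw [← vecMul_transpose, ← dotProduct_mulVec, mulVec_mulVec, mulVec_mulVec, hconj]

lemma cov_mul {p q n : ℕ} (A : Matrix (Fin q) (Fin p) ℝ) (X : Matrix (Fin p) (Fin n) ℝ) :
    cov (A * X) = A * cov X * Aᵀ := by
  simp only [cov, transpose_mul, Matrix.mul_smul, Matrix.smul_mul, Matrix.mul_assoc]

lemma mahalanobisSq_mul {p n : ℕ} (X : Matrix (Fin p) (Fin n) ℝ) {A : Matrix (Fin p) (Fin p) ℝ}
    (hA : IsUnit A.det) : mahalanobisSq (A * X) = mahalanobisSq X := by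
  ext i
  rw [mahalanobisSq, col_mul, cov_mul, dotProduct_mulVec_inv_conj hA, mahalanobisSq]

theorem stmt_17_general {p n : ℕ}
    (X : Matrix (Fin p) (Fin n) ℝ)
    (w : ℝ → ℝ)
    (A : Matrix (Fin p) (Fin p) ℝ) (hA : IsUnit A.det) :
    covW w (A * X) = A * covW w X * Aᵀ := by
  simp only [covW, mahalanobisSq_mul X hA, col_mul, vecMulVec_mulVec_mulVec, Matrix.smul_mul,
    Matrix.mul_smul, Matrix.mul_sum, Matrix.sum_mul]

/-- Affine equivariance of the one-step M-scatter matrix: for any invertible `p × p`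
matrix `A`, `cov_w(A * X) = A * cov_w(X) * Aᵀ`. -/
theorem stmt_17 {p n : ℕ} (hp : 0 < p) (hpn : p < n)
    (X : Matrix (Fin p) (Fin n) ℝ)
    (hXc : X *ᵥ (fun _ => (1 : ℝ)) = 0)
    (hcov : IsUnit (cov X).det)
    (w : ℝ → ℝ)
    (A : Matrix (Fin p) (Fin p) ℝ) (hA : IsUnit A.det) :
    covW w (A * X) = A * covW w X * Aᵀ :=
  stmt_17_general X w A hA
end

section
/- (Affine invariance of the ICS eigenvalues) Let p, n be natural numbers with 0 < p < n, let X be a centered p×n real data matrix whose covariance matrix cov(X) is positive definite, let w : ℝ → ℝ, and let A be an invertible p×p real matrix. Define for a centered data matrix Y with positive definite cov(Y) the matrix M(Y) = cov(Y)^{−1/2} * cov_w(Y) * cov(Y)^{−1/2}, where cov(Y)^{−1/2} is the inverse of the positive semidefinite symmetric square root of cov(Y). Then M(A * X) and M(X) have the same characteristic polynomial; in particular the ICS eigenvalues are invariant under invertible linear transformations of the data. -/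
/-!
Since `charpoly (L * R) = charpoly (R * L)`, the ICS matrix `S⁻¹ * covW * S⁻¹` has the same
characteristic polynomial as `covW * (S * S)⁻¹ = covW * cov⁻¹`. Under `X ↦ A * X` the Mahalanobis
distances do not change, so `cov` and `covW` both transform as `V ↦ A * V * Aᵀ`, and
`covW * cov⁻¹` is merely conjugated by `A`.
-/

open Matrix

section Charpoly

variable {m : Type*} [Fintype m] [DecidableEq m] {R : Type*} [CommRing R]

theorem Matrix.charpoly_conj_of_isUnit_det {P : Matrix m m R} (hP : IsUnit P.det)
    (M : Matrix m m R) : (P * M * P⁻¹).charpoly = M.charpoly := by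
  rw [charpoly_mul_comm, ← Matrix.mul_assoc, nonsing_inv_mul P hP, Matrix.one_mul]

theorem Matrix.charpoly_inv_mul_mul_inv (S V : Matrix m m R) :
    (S⁻¹ * V * S⁻¹).charpoly = (V * (S * S)⁻¹).charpoly := by
  rw [charpoly_mul_comm, ← Matrix.mul_assoc, ← Matrix.mul_inv_rev, charpoly_mul_comm]

end Charpoly

section Equivariance

variable {p q n : ℕ} (X : Matrix (Fin p) (Fin n) ℝ)

theorem cov_mul_left (A : Matrix (Fin q) (Fin p) ℝ) : cov (A * X) = A * cov X * Aᵀ := by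
  simp only [cov, transpose_mul, Matrix.mul_smul, Matrix.smul_mul, Matrix.mul_assoc]

theorem col_mul_left (A : Matrix (Fin q) (Fin p) ℝ) (i : Fin n) :
    (fun k => (A * X) k i) = A *ᵥ (fun k => X k i) :=
  rfl

variable {A : Matrix (Fin p) (Fin p) ℝ} (hA : IsUnit A.det)
include hA

theorem mahalanobisSq_mul_left (i : Fin n) : mahalanobisSq (A * X) i = mahalanobisSq X i := by
  have hAT : IsUnit Aᵀ.det := by rwa [det_transpose]
  simp only [mahalanobisSq, col_mul_left, cov_mul_left, Matrix.mul_inv_rev]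
  rw [mulVec_mulVec, ← vecMul_transpose, dotProduct_mulVec, vecMul_vecMul, dotProduct_mulVec,
    Matrix.mul_assoc, Matrix.mul_assoc, mul_nonsing_inv_cancel_left _ _ hAT,
    ← Matrix.mul_assoc, nonsing_inv_mul_cancel_right _ _ hA]

theorem covW_mul_left (w : ℝ → ℝ) : covW w (A * X) = A * covW w X * Aᵀ := by
  simp only [covW, mahalanobisSq_mul_left X hA, col_mul_left, Matrix.mul_smul, Matrix.smul_mul,
    Matrix.mul_sum, Matrix.sum_mul, mul_vecMulVec, vecMulVec_mul, vecMul_transpose]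

theorem covW_mul_inv_cov_mul_left (w : ℝ → ℝ) :
    covW w (A * X) * (cov (A * X))⁻¹ = A * (covW w X * (cov X)⁻¹) * A⁻¹ := by
  have hAT : IsUnit Aᵀ.det := by rwa [det_transpose]
  rw [covW_mul_left X hA, cov_mul_left, Matrix.mul_inv_rev, Matrix.mul_inv_rev]
  simp only [Matrix.mul_assoc, mul_nonsing_inv_cancel_left _ _ hAT]

end Equivariance

theorem stmt_18_general {p n : ℕ}
    (X : Matrix (Fin p) (Fin n) ℝ)
    (w : ℝ → ℝ)
    (A : Matrix (Fin p) (Fin p) ℝ) (hA : IsUnit A.det)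
    (S₁ S₂ : Matrix (Fin p) (Fin p) ℝ)
    (hS₁sq : S₁ * S₁ = cov X)
    (hS₂sq : S₂ * S₂ = cov (A * X)) :
    (S₂⁻¹ * covW w (A * X) * S₂⁻¹).charpoly = (S₁⁻¹ * covW w X * S₁⁻¹).charpoly := by
  rw [charpoly_inv_mul_mul_inv, charpoly_inv_mul_mul_inv, hS₁sq, hS₂sq,
    covW_mul_inv_cov_mul_left X hA, charpoly_conj_of_isUnit_det hA]

/-- Affine invariance of the ICS eigenvalues: with `S₁` and `S₂` the positive semidefinite
symmetric square roots of `cov(X)` and `cov(A * X)` respectively, the ICS matrices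
`M(A * X) = S₂⁻¹ * cov_w(A * X) * S₂⁻¹` and `M(X) = S₁⁻¹ * cov_w(X) * S₁⁻¹` have the same
characteristic polynomial, so the ICS eigenvalues are invariant under invertible linear
transformations of the data. -/
theorem stmt_18 {p n : ℕ} (hp : 0 < p) (hpn : p < n)
    (X : Matrix (Fin p) (Fin n) ℝ)
    (hXc : X *ᵥ (fun _ => (1 : ℝ)) = 0)
    (hcov : (cov X).PosDef)
    (w : ℝ → ℝ)
    (A : Matrix (Fin p) (Fin p) ℝ) (hA : IsUnit A.det)
    (S₁ S₂ : Matrix (Fin p) (Fin p) ℝ)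
    (hS₁ : S₁.PosSemidef) (hS₁sq : S₁ * S₁ = cov X)
    (hS₂ : S₂.PosSemidef) (hS₂sq : S₂ * S₂ = cov (A * X)) :
    (S₂⁻¹ * covW w (A * X) * S₂⁻¹).charpoly = (S₁⁻¹ * covW w X * S₁⁻¹).charpoly :=
  stmt_18_general X w A hA S₁ S₂ hS₁sq hS₂sq
end
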